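/- (Lemma 1, robustness of the factor-out layer.) Let n, m ≥ 1 be natural numbers, let L, δ ≥ 0 and b₁, b₂, b₃ > 0 be real numbers. Let μ, σ : EuclideanSpace ℝ (Fin m) → EuclideanSpace ℝ (Fin n) both be L-Lipschitz, and let y, y⋆ ∈ EuclideanSpace ℝ (Fin m) satisfy ‖y − y⋆‖₂ ≤ δ. Assume for all i: σ(y)ᵢ ≥ 1/b₃, σ(y⋆)ᵢ ≥ 1/b₃, |μ(y)ᵢ| ≤ b₂, |μ(y⋆)ᵢ| ≤ b₂. Let z, z⋆ : Fin n → ℝ satisfy |zᵢ| ≤ b₁ and |z⋆ᵢ| ≤ b₁ for every i, and ‖z − z⋆‖₂ ≤ δ. Then |ℓ(z; μ(y), σ(y)) − ℓ(z⋆; μ(y⋆), σ(y⋆))| ≤ δ · √n · ( L·((b₁ + b₂)²·b₃³ + (b₁ + b₂)·b₃² + b₃) + (b₁ + b₂)·b₃² ). -/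

import Mathlib

/-- The diagonal-Gaussian log-density
`ℓ(z; μ, s) = −(n/2)·log(2π) − ∑ᵢ log sᵢ − ∑ᵢ (zᵢ − μᵢ)²/(2 sᵢ²)`. -/
noncomputable def gaussLogDensity (n : ℕ) (z μ s : Fin n → ℝ) : ℝ :=
  -((n : ℝ) / 2) * Real.log (2 * Real.pi) - ∑ i, Real.log (s i)
    - ∑ i, (z i - μ i) ^ 2 / (2 * (s i) ^ 2)

/-! Coordinatewise, on the region `|zᵢ - μᵢ| ≤ B`, `sᵢ ≥ 1/r`, the term `log sᵢ` is `r`-Lipschitz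
in `sᵢ`, and `(zᵢ - μᵢ)² / (2 sᵢ²) = (wᵢ / sᵢ)² / 2` with `wᵢ = zᵢ - μᵢ` is Lipschitz with
constants `B r²` in `wᵢ` and `B² r³` in `sᵢ`. Summing over `i` turns these `ℓ¹` bounds into `ℓ²`
bounds at the cost of `√n` (Cauchy–Schwarz), and `y` enters only through
`‖μ(y) - μ(y⋆)‖, ‖σ(y) - σ(y⋆)‖ ≤ L δ`. -/

open Finset Real

lemma sum_abs_le_sqrt_card_mul_norm {ι : Type*} [Fintype ι] (v : EuclideanSpace ℝ ι) :
    ∑ i, |v i| ≤ √(Fintype.card ι) * ‖v‖ := by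
  rw [EuclideanSpace.norm_eq, ← sqrt_mul (Nat.cast_nonneg _)]
  apply le_sqrt_of_sq_le
  simpa [sq_abs] using sq_sum_le_card_mul_sum_sq (s := univ) (f := fun i => |v i|)

lemma log_sub_log_le_div {c a b : ℝ} (hc : 0 < c) (hb : c ≤ b) (hba : b ≤ a) :
    log a - log b ≤ (a - b) / c := by
  have hb0 : 0 < b := hc.trans_le hb
  calc log a - log b = log (a / b) := (log_div (hb0.trans_le hba).ne' hb0.ne').symm
    _ ≤ a / b - 1 := log_le_sub_one_of_pos (div_pos (hb0.trans_le hba) hb0)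
    _ = (a - b) / b := by field_simp
    _ ≤ (a - b) / c := div_le_div_of_nonneg_left (by linarith) hc hb

lemma abs_log_sub_log_le_div {c a b : ℝ} (hc : 0 < c) (ha : c ≤ a) (hb : c ≤ b) :
    |log a - log b| ≤ |a - b| / c := by
  wlog hba : b ≤ a generalizing a b
  · rw [abs_sub_comm, abs_sub_comm a]
    exact this hb ha (le_of_not_ge hba)
  rw [abs_of_nonneg (sub_nonneg.2 (log_le_log (hc.trans_le hb) hba)),
    abs_of_nonneg (sub_nonneg.2 hba)]
  exact log_sub_log_le_div hc hb hba

lemma abs_inv_sub_inv_le {c a b : ℝ} (hc : 0 < c) (ha : c ≤ a) (hb : c ≤ b) :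
    |a⁻¹ - b⁻¹| ≤ |a - b| / c ^ 2 := by
  have ha0 : 0 < a := hc.trans_le ha
  have hb0 : 0 < b := hc.trans_le hb
  rw [inv_sub_inv ha0.ne' hb0.ne', abs_div, abs_sub_comm, abs_of_pos (mul_pos ha0 hb0), sq]
  gcongr

lemma abs_sq_sub_sq_le {B a b : ℝ} (ha : |a| ≤ B) (hb : |b| ≤ B) :
    |a ^ 2 - b ^ 2| ≤ 2 * B * |a - b| := by
  rw [sq_sub_sq, abs_mul]
  gcongr
  linarith [abs_add_le a b]

lemma abs_sq_div_two_mul_sq_sub_le {B r w w' s s' : ℝ} (hr : 0 < r) (hw : |w| ≤ B)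
    (hw' : |w'| ≤ B) (hs : r⁻¹ ≤ s) (hs' : r⁻¹ ≤ s') :
    |w ^ 2 / (2 * s ^ 2) - w' ^ 2 / (2 * s' ^ 2)| ≤
      B * r ^ 2 * |w - w'| + B ^ 2 * r ^ 3 * |s - s'| := by
  have hB : 0 ≤ B := (abs_nonneg w).trans hw
  have hs0 : 0 < s := (inv_pos.2 hr).trans_le hs
  have hs0' : 0 < s' := (inv_pos.2 hr).trans_le hs'
  have hinv : |s⁻¹| ≤ r := by rw [abs_inv, abs_of_pos hs0]; exact inv_le_of_inv_le₀ hr hs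
  have hinv' : |s'⁻¹| ≤ r := by rw [abs_inv, abs_of_pos hs0']; exact inv_le_of_inv_le₀ hr hs'
  have hu : |w * s⁻¹| ≤ B * r := by rw [abs_mul]; gcongr
  have hu' : |w' * s'⁻¹| ≤ B * r := by rw [abs_mul]; gcongr
  have hdu : |w * s⁻¹ - w' * s'⁻¹| ≤ r * |w - w'| + B * r ^ 2 * |s - s'| := by
    have hds : |s⁻¹ - s'⁻¹| ≤ r ^ 2 * |s - s'| := by
      simpa [div_eq_mul_inv, inv_pow, mul_comm] using abs_inv_sub_inv_le (inv_pos.2 hr) hs hs'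
    calc |w * s⁻¹ - w' * s'⁻¹| = |(w - w') * s⁻¹ + w' * (s⁻¹ - s'⁻¹)| := by ring_nf
      _ ≤ |w - w'| * |s⁻¹| + |w'| * |s⁻¹ - s'⁻¹| := by
          rw [← abs_mul, ← abs_mul]; exact abs_add_le _ _
      _ ≤ |w - w'| * r + B * (r ^ 2 * |s - s'|) := by gcongr
      _ = _ := by ring
  calc |w ^ 2 / (2 * s ^ 2) - w' ^ 2 / (2 * s' ^ 2)|
      = |((w * s⁻¹) ^ 2 - (w' * s'⁻¹) ^ 2) / 2| := by congr 1; field_simp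
    _ = |(w * s⁻¹) ^ 2 - (w' * s'⁻¹) ^ 2| / 2 := by rw [abs_div, abs_two]
    _ ≤ 2 * (B * r) * (r * |w - w'| + B * r ^ 2 * |s - s'|) / 2 := by
        gcongr
        exact (abs_sq_sub_sq_le hu hu').trans (by gcongr)
    _ = _ := by ring

lemma abs_gaussLogDensity_sub_le {n : ℕ} {B r : ℝ} (hr : 0 < r) (hB : 0 ≤ B)
    {z z' m m' s s' : EuclideanSpace ℝ (Fin n)}
    (hzm : ∀ i, |z i - m i| ≤ B) (hzm' : ∀ i, |z' i - m' i| ≤ B)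
    (hs : ∀ i, r⁻¹ ≤ s i) (hs' : ∀ i, r⁻¹ ≤ s' i) :
    |gaussLogDensity n z m s - gaussLogDensity n z' m' s'| ≤
      √n * (B * r ^ 2 * (‖z - z'‖ + ‖m - m'‖) + (B ^ 2 * r ^ 3 + r) * ‖s - s'‖) := by
  have hcoord : ∀ i, |(log (s i) - log (s' i))
        + ((z i - m i) ^ 2 / (2 * s i ^ 2) - (z' i - m' i) ^ 2 / (2 * s' i ^ 2))| ≤
      B * r ^ 2 * (|(z - z') i| + |(m - m') i|) + (B ^ 2 * r ^ 3 + r) * |(s - s') i| := by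
    intro i
    have hlog : |log (s i) - log (s' i)| ≤ r * |s i - s' i| := by
      simpa [mul_comm] using abs_log_sub_log_le_div (inv_pos.2 hr) (hs i) (hs' i)
    have hquad := abs_sq_div_two_mul_sq_sub_le hr (hzm i) (hzm' i) (hs i) (hs' i)
    have hw : |(z i - m i) - (z' i - m' i)| ≤ |z i - z' i| + |m i - m' i| := by
      rw [sub_sub_sub_comm]; exact abs_sub _ _
    simp only [PiLp.sub_apply]
    calc _ ≤ |log (s i) - log (s' i)|
          + |(z i - m i) ^ 2 / (2 * s i ^ 2) - (z' i - m' i) ^ 2 / (2 * s' i ^ 2)| :=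
          abs_add_le _ _
      _ ≤ r * |s i - s' i| + (B * r ^ 2 * (|z i - z' i| + |m i - m' i|)
          + B ^ 2 * r ^ 3 * |s i - s' i|) := by gcongr; exact hquad.trans (by gcongr)
      _ = _ := by ring
  have hsum := sum_le_sum fun i (_ : i ∈ univ) => hcoord i
  have hdiff : gaussLogDensity n z' m' s' - gaussLogDensity n z m s =
      ∑ i, ((log (s i) - log (s' i))
        + ((z i - m i) ^ 2 / (2 * s i ^ 2) - (z' i - m' i) ^ 2 / (2 * s' i ^ 2))) := by
    simp only [gaussLogDensity, sum_add_distrib, sum_sub_distrib]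
    ring
  have hnorm (v : EuclideanSpace ℝ (Fin n)) : ∑ i, |v i| ≤ √n * ‖v‖ := by
    simpa using sum_abs_le_sqrt_card_mul_norm v
  rw [abs_sub_comm, hdiff]
  calc _ ≤ _ := (abs_sum_le_sum_abs _ _).trans hsum
    _ = B * r ^ 2 * (∑ i, |(z - z') i| + ∑ i, |(m - m') i|)
          + (B ^ 2 * r ^ 3 + r) * ∑ i, |(s - s') i| := by
        simp only [sum_add_distrib, mul_sum, mul_add]
    _ ≤ B * r ^ 2 * (√n * ‖z - z'‖ + √n * ‖m - m'‖)
          + (B ^ 2 * r ^ 3 + r) * (√n * ‖s - s'‖) := by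
        gcongr <;> exact hnorm _
    _ = _ := by ring

theorem factor_out_layer_robustness_general
    (n m : ℕ)
    (L δ : ℝ) (hL : 0 ≤ L)
    (b₁ b₂ b₃ : ℝ) (hb₁ : 0 < b₁) (hb₂ : 0 < b₂) (hb₃ : 0 < b₃)
    (μ σ : EuclideanSpace ℝ (Fin m) → EuclideanSpace ℝ (Fin n))
    (hμlip : ∀ a b : EuclideanSpace ℝ (Fin m), ‖μ a - μ b‖ ≤ L * ‖a - b‖)
    (hσlip : ∀ a b : EuclideanSpace ℝ (Fin m), ‖σ a - σ b‖ ≤ L * ‖a - b‖)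
    (y ystar : EuclideanSpace ℝ (Fin m))
    (hy : ‖y - ystar‖ ≤ δ)
    (hσy : ∀ i : Fin n, 1 / b₃ ≤ σ y i)
    (hσystar : ∀ i : Fin n, 1 / b₃ ≤ σ ystar i)
    (hμy : ∀ i : Fin n, |μ y i| ≤ b₂)
    (hμystar : ∀ i : Fin n, |μ ystar i| ≤ b₂)
    (z zstar : EuclideanSpace ℝ (Fin n))
    (hz : ∀ i, |z i| ≤ b₁) (hzstar : ∀ i, |zstar i| ≤ b₁)
    (hzz : ‖z - zstar‖ ≤ δ) :
    |gaussLogDensity n z (μ y) (σ y) - gaussLogDensity n zstar (μ ystar) (σ ystar)| ≤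
      δ * Real.sqrt n *
        (L * ((b₁ + b₂) ^ 2 * b₃ ^ 3 + (b₁ + b₂) * b₃ ^ 2 + b₃) + (b₁ + b₂) * b₃ ^ 2) := by
  have hzμ (i) : |z i - μ y i| ≤ b₁ + b₂ := (abs_sub _ _).trans (add_le_add (hz i) (hμy i))
  have hzμstar (i) : |zstar i - μ ystar i| ≤ b₁ + b₂ :=
    (abs_sub _ _).trans (add_le_add (hzstar i) (hμystar i))
  have hLy : L * ‖y - ystar‖ ≤ L * δ := mul_le_mul_of_nonneg_left hy hL
  simp only [one_div] at hσy hσystar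
  calc _ ≤ √n * ((b₁ + b₂) * b₃ ^ 2 * (‖z - zstar‖ + ‖μ y - μ ystar‖)
          + ((b₁ + b₂) ^ 2 * b₃ ^ 3 + b₃) * ‖σ y - σ ystar‖) :=
        abs_gaussLogDensity_sub_le hb₃ (by positivity) hzμ hzμstar hσy hσystar
    _ ≤ √n * ((b₁ + b₂) * b₃ ^ 2 * (δ + L * δ) + ((b₁ + b₂) ^ 2 * b₃ ^ 3 + b₃) * (L * δ)) := by
        gcongr
        exacts [(hμlip y ystar).trans hLy, (hσlip y ystar).trans hLy]
    _ = _ := by ring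

/-- **Lemma 1, robustness of the factor-out layer.** Perturbing both the
conditioning input `y` and the latent `z` by at most `δ` in Euclidean norm changes the
factor-out layer's log-likelihood by at most
`δ·√n·(L·((b₁+b₂)²b₃³ + (b₁+b₂)b₃² + b₃) + (b₁+b₂)b₃²)`. -/
theorem factor_out_layer_robustness
    (n m : ℕ) (hn : 1 ≤ n) (hm : 1 ≤ m)
    (L δ : ℝ) (hL : 0 ≤ L) (hδ : 0 ≤ δ)
    (b₁ b₂ b₃ : ℝ) (hb₁ : 0 < b₁) (hb₂ : 0 < b₂) (hb₃ : 0 < b₃)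
    (μ σ : EuclideanSpace ℝ (Fin m) → EuclideanSpace ℝ (Fin n))
    (hμlip : ∀ a b : EuclideanSpace ℝ (Fin m), ‖μ a - μ b‖ ≤ L * ‖a - b‖)
    (hσlip : ∀ a b : EuclideanSpace ℝ (Fin m), ‖σ a - σ b‖ ≤ L * ‖a - b‖)
    (y ystar : EuclideanSpace ℝ (Fin m))
    (hy : ‖y - ystar‖ ≤ δ)
    (hσy : ∀ i : Fin n, 1 / b₃ ≤ σ y i)
    (hσystar : ∀ i : Fin n, 1 / b₃ ≤ σ ystar i)
    (hμy : ∀ i : Fin n, |μ y i| ≤ b₂)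
    (hμystar : ∀ i : Fin n, |μ ystar i| ≤ b₂)
    (z zstar : EuclideanSpace ℝ (Fin n))
    (hz : ∀ i, |z i| ≤ b₁) (hzstar : ∀ i, |zstar i| ≤ b₁)
    (hzz : ‖z - zstar‖ ≤ δ) :
    |gaussLogDensity n z (μ y) (σ y) - gaussLogDensity n zstar (μ ystar) (σ ystar)| ≤
      δ * Real.sqrt n *
        (L * ((b₁ + b₂) ^ 2 * b₃ ^ 3 + (b₁ + b₂) * b₃ ^ 2 + b₃) + (b₁ + b₂) * b₃ ^ 2) :=
  factor_out_layer_robustness_general n m L δ hL b₁ b₂ b₃ hb₁ hb₂ hb₃ μ σ hμlip hσlip y ystar hy hσy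
    hσystar hμy hμystar z zstar hz hzstar hzz
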